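/- Let p be a prime and N a positive integer with p > N. Then there exists a positive integer a < p such that v_p(B_N(a)·H_{Na}) = 0, where B_N(m) = (Nm)!/m!^N. -/

import Mathlib

/-!
Take `a = ⌈p / N⌉`, so that `p ≤ N a < 2p` when `2 ≤ N < p` (and `a = 1` when `N ≤ 1`).
By Legendre, `p` divides `(Na)!` exactly once and does not divide `a!`, so `v_p(B_N(a)) = 1`.
Among `1, …, Na` only the term `1/p` of `H_{Na}` has a denominator divisible by `p`, so the
ultrametric inequality gives `v_p(H_{Na}) = -1`, and the two valuations cancel.
-/

/-- The `n`-th harmonic number `H_n = ∑_{i=1}^n 1/i`, as a rational number. -/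
def H (n : ℕ) : ℚ := ∑ i ∈ Finset.range n, (1 : ℚ) / (i + 1)

/-- `B_N(m) = (Nm)!/(m!)^N`, as a rational number. -/
def B (N m : ℕ) : ℚ := (Nat.factorial (N * m) : ℚ) / ((Nat.factorial m : ℚ)) ^ N

open Nat

lemma H_eq_harmonic (n : ℕ) : H n = harmonic n := by
  simp [H, harmonic]

lemma B_pos (N m : ℕ) : 0 < B N m := by
  unfold B
  positivity

lemma exists_lt_le_mul_lt_two_mul {p N : ℕ} (hN : 2 ≤ N) (hNp : N ≤ p) :
    ∃ a, a < p ∧ p ≤ N * a ∧ N * a < 2 * p := by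
  have hdiv := Nat.div_add_mod (p + N - 1) N
  have hmod := Nat.mod_lt (p + N - 1) (by omega : 0 < N)
  refine ⟨(p + N - 1) / N, ?_, by omega, by omega⟩
  by_contra! hpa
  have := Nat.mul_le_mul hN hpa
  omega

section Valuations

variable {p : ℕ} [Fact p.Prime]

lemma padicValNat_factorial_of_lt_sq {n : ℕ} (hn : n < p ^ 2) : padicValNat p n ! = n / p := by
  rw [padicValNat_factorial (b := 2) (Nat.log_lt_of_lt_pow' two_ne_zero hn)]
  simp

lemma padicValRat_B (N m : ℕ) :
    padicValRat p (B N m) = padicValNat p (N * m)! - N * padicValNat p m ! := by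
  rw [B, padicValRat.div (by positivity) (by positivity), padicValRat.pow,
    padicValRat.of_nat, padicValRat.of_nat]

lemma padicValRat_B_of_le_mul_lt_two_mul {N a : ℕ} (ha : a < p) (h₁ : p ≤ N * a)
    (h₂ : N * a < 2 * p) : padicValRat p (B N a) = 1 := by
  have hp := (Fact.out : p.Prime).two_le
  rw [padicValRat_B, padicValNat_factorial_of_lt_sq (by nlinarith),
    padicValNat_factorial_of_lt_sq (by nlinarith), Nat.div_eq_of_lt ha,
    Nat.div_eq_of_lt_le (k := 1) (by omega) (by omega)]
  simp

lemma padicValRat_harmonic_of_le_of_lt_two_mul {n : ℕ} (h₁ : p ≤ n) (h₂ : n < 2 * p) :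
    padicValRat p (harmonic n) = -1 := by
  have hp := (Fact.out : p.Prime).two_le
  set F : ℕ → ℚ := fun i => (↑(i + 1))⁻¹
  have hF_pos (i : ℕ) : 0 < F i := by positivity
  have hFp : padicValRat p (F (p - 1)) = -1 := by
    show padicValRat p (↑(p - 1 + 1))⁻¹ = -1
    rw [Nat.sub_add_cancel (by omega : 1 ≤ p), padicValRat.inv,
      padicValRat.self (Fact.out : p.Prime).one_lt]
  -- every `i + 1 ≤ n < 2p` other than `p` itself is prime to `p`
  have hF_rest (i : ℕ) (hi : i ∈ (Finset.range n).erase (p - 1)) : padicValRat p (F i) = 0 := by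
    rw [Finset.mem_erase, Finset.mem_range] at hi
    have hndvd : ¬ p ∣ i + 1 := fun hdvd => by
      have := Nat.eq_of_dvd_of_lt_two_mul (succ_ne_zero i) hdvd (by omega)
      omega
    rw [padicValRat.inv, padicValRat.of_nat, padicValNat.eq_zero_of_not_dvd hndvd, Nat.cast_zero,
      neg_zero]
  have hmem : p - 1 ∈ Finset.range n := Finset.mem_range.mpr (by omega)
  have hrest_ne : ((Finset.range n).erase (p - 1)).Nonempty := Finset.card_pos.mp <| by
    rw [Finset.card_erase_of_mem hmem, Finset.card_range]
    omega
  have hlt := padicValRat.lt_sum_of_lt hrest_ne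
    (fun i hi => by rw [hF_rest i hi, hFp]; norm_num) hF_pos
  have hrest_pos := Finset.sum_pos (fun i _ => hF_pos i) hrest_ne
  rw [harmonic, ← Finset.add_sum_erase _ _ hmem,
    padicValRat.add_eq_of_lt (by positivity) (hF_pos _).ne' hrest_pos.ne' hlt, hFp]

end Valuations

theorem exists_a_vp_zero_general (p N : ℕ) (hp : p.Prime) (hpN : N < p) :
    ∃ a : ℕ, 1 ≤ a ∧ a < p ∧ padicValRat p (B N a * H (N * a)) = 0 := by
  have : Fact p.Prime := ⟨hp⟩
  rcases le_or_gt N 1 with hN | hN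
  · refine ⟨1, le_rfl, hp.one_lt, ?_⟩
    interval_cases N <;> simp [B, H]
  · obtain ⟨a, hap, h₁, h₂⟩ := exists_lt_le_mul_lt_two_mul hN hpN.le
    refine ⟨a, Nat.pos_of_ne_zero (by rintro rfl; omega), hap, ?_⟩
    rw [H_eq_harmonic, padicValRat.mul (B_pos N a).ne' (harmonic_pos (by omega)).ne',
      padicValRat_B_of_le_mul_lt_two_mul hap h₁ h₂, padicValRat_harmonic_of_le_of_lt_two_mul h₁ h₂]
    norm_num

theorem exists_a_vp_zero (p N : ℕ) (hp : p.Prime) (hN : 1 ≤ N) (hpN : N < p) :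
    ∃ a : ℕ, 1 ≤ a ∧ a < p ∧ padicValRat p (B N a * H (N * a)) = 0 :=
  exists_a_vp_zero_general p N hp hpN
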